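/- Let φ : X → Y be a continuous surjection between Hausdorff spaces with X locally compact. Then φ is semi-open if and only if the preimage φ⁻¹[A] of every residual subset A of Y is residual in X. -/

import Mathlib

/-!
A semi-open map pulls dense sets back to dense sets, hence dense open sets to dense open sets,
and so residual sets to residual sets. Conversely, if some nonempty open `U` had an image with
empty interior, pick a compact `K ⊆ U` with nonempty interior: `φ '' K` is closed with empty
interior, hence meagre, so its preimage is meagre, although it contains the nonempty open set
`interior K`; this contradicts the Baire category theorem in `X`.
-/

/-- A continuous surjection `g : A → B` is *semi-open* if for every nonempty open set
`U ⊆ A`, the interior of the image `g '' U` is nonempty. -/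
def SemiOpen {A B : Type*} [TopologicalSpace A] [TopologicalSpace B] (g : A → B) : Prop :=
  ∀ U : Set A, IsOpen U → U.Nonempty → (interior (g '' U)).Nonempty

open Filter Set

section

variable {A B : Type*} [TopologicalSpace A] [TopologicalSpace B] {g : A → B}

theorem SemiOpen.dense_preimage (h : SemiOpen g) {s : Set B} (hs : Dense s) :
    Dense (g ⁻¹' s) := by
  refine dense_iff_inter_open.2 fun U hU hne => ?_
  obtain ⟨y, hyU, hys⟩ := hs.inter_open_nonempty _ isOpen_interior (h U hU hne)
  obtain ⟨x, hxU, rfl⟩ := interior_subset hyU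
  exact ⟨x, hxU, hys⟩

theorem SemiOpen.tendsto_residual (hc : Continuous g) (h : SemiOpen g) :
    Tendsto g (residual A) (residual B) :=
  le_countableGenerate_iff_of_countableInterFilter.mpr fun _ ⟨ht, htd⟩ =>
    residual_of_dense_open (ht.preimage hc) (h.dense_preimage htd)

theorem semiOpen_of_tendsto_residual [LocallyCompactSpace A] [BaireSpace A] [T2Space B]
    (hc : Continuous g) (h : Tendsto g (residual A) (residual B)) : SemiOpen g := by
  intro U hU ⟨x, hxU⟩
  obtain ⟨K, hK, hxK, hKU⟩ := exists_compact_subset hU hxU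
  by_contra hempty
  have hKint : interior (g '' K) = ∅ := subset_empty_iff.1 <|
    (interior_mono (image_mono hKU)).trans (not_nonempty_iff_eq_empty.1 hempty).le
  have hKmeagre : IsMeagre (g '' K) :=
    ((hK.image hc).isClosed.isNowhereDense_iff.2 hKint).isMeagre
  have hpre : IsMeagre (g ⁻¹' (g '' K)) := h hKmeagre
  exact not_isMeagre_of_isOpen isOpen_interior ⟨x, hxK⟩
    (hpre.mono (interior_subset.trans (subset_preimage_image g K)))

end

theorem semiOpen_iff_preimage_residual
    {X Y : Type*} [TopologicalSpace X] [T2Space X] [LocallyCompactSpace X]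
    [TopologicalSpace Y] [T2Space Y]
    {φ : X → Y} (hc : Continuous φ) :
    SemiOpen φ ↔ ∀ A : Set Y, A ∈ residual Y → φ ⁻¹' A ∈ residual X :=
  -- the right-hand side is `Tendsto φ (residual X) (residual Y)` unfolded
  ⟨fun h => h.tendsto_residual hc, semiOpen_of_tendsto_residual hc⟩
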